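/- Noncommutative q-Chu–Vandermonde summation of type II: Let A and C be elements of a unit ring R, let Q be an invertible element of R commuting with both A and C, and let n be a nonnegative integer. Then Σ_{k=0}^{n} ⌊A, Q^{−n}; C, Q; Q, Q⌉_k = ⌊CA^{−1}Q; C; Q, A⌉_n · (A−CQ^n)^{−1} · (A−C), i.e. the terminating noncommutative basic hypergeometric series of type II, ₂φ₁⌊A, Q^{−n}; C; Q, Q⌉, equals the type II noncommutative Q-shifted factorial ⌊CA^{−1}Q; C; Q, A⌉_n multiplied on the right by (A−CQ^n)^{−1}(A−C). -/
import Mathlib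


/-- Ordered (noncommutative) product `f 0 * f 1 * ⋯ * f (n-1)`. -/
def opr {R : Type*} [Ring R] (n : ℕ) (f : ℕ → R) : R :=
  ((List.range n).map f).prod

namespace NCChu

variable {R : Type*} [Ring R]

theorem opr_zero (f : ℕ → R) : opr 0 f = 1 := rfl

theorem opr_succ (n : ℕ) (f : ℕ → R) : opr (n + 1) f = opr n f * f n := by
  simp [opr, List.range_succ]

theorem opr_succ' (n : ℕ) (f : ℕ → R) :
    opr (n + 1) f = f 0 * opr n (fun j => f (j + 1)) := by
  simp [opr, List.range_succ_eq_map, Function.comp_def]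

theorem opr_congr {n : ℕ} {f g : ℕ → R} (h : ∀ j, j < n → f j = g j) :
    opr n f = opr n g := by
  induction n with
  | zero => rfl
  | succ n ih =>
    rw [opr_succ, opr_succ, ih (fun j hj => h j (by omega)), h n (by omega)]

theorem commute_opr {y : R} {f : ℕ → R} (h : ∀ j, Commute y (f j)) (n : ℕ) :
    Commute y (opr n f) := by
  induction n with
  | zero => exact Commute.one_right y
  | succ n ih => rw [opr_succ]; exact ih.mul_right (h n)

theorem opr_split (n : ℕ) (u v : ℕ → R) (h : ∀ i j, Commute (u i) (v j)) :
    opr n (fun j => u j * v j) = opr n u * opr n v := by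
  induction n with
  | zero => simp [opr_zero]
  | succ n ih =>
    rw [opr_succ, opr_succ, opr_succ, ih]
    have hc : Commute (u n) (opr n v) := commute_opr (fun j => h n j) n
    rw [mul_assoc (opr n u), ← mul_assoc (opr n v), ← hc.eq]
    noncomm_ring

theorem opr_mul_const (n : ℕ) (f : ℕ → R) (c : R) (h : ∀ j, Commute c (f j)) :
    opr n (fun j => f j * c) = opr n f * c ^ n := by
  induction n with
  | zero => simp [opr_zero]
  | succ n ih =>
    rw [opr_succ, opr_succ, ih, pow_succ, ← mul_assoc, mul_assoc (opr n f),
      ((h n).pow_left n).eq]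
    noncomm_ring

theorem opr_shift (m : ℕ) (a b : ℕ → R) :
    a 0 * opr m (fun j => b j * a (j + 1)) = opr m (fun j => a j * b j) * a m := by
  induction m with
  | zero => simp [opr_zero]
  | succ m ih =>
    rw [opr_succ, opr_succ, ← mul_assoc, ih]
    noncomm_ring

theorem opr_pair (m : ℕ) (a b : ℕ → R) :
    opr (m + 1) (fun j => a j * b (j + 1)) =
      a 0 * opr m (fun j => b (j + 1) * a (j + 1)) * b (m + 1) := by
  induction m with
  | zero => simp [opr_succ, opr_zero]
  | succ m ih =>
    rw [opr_succ, ih, opr_succ]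
    noncomm_ring

theorem mul_left_comm' {x y z : R} (h : Commute x y) : x * (y * z) = y * (x * z) := by
  rw [← mul_assoc, h.eq, mul_assoc]

theorem commute_ringInverse {a b : R} (h : Commute a b) : Commute a (Ring.inverse b) := by
  by_cases hb : IsUnit b
  · obtain ⟨u, rfl⟩ := hb
    rw [Ring.inverse_unit]
    exact h.units_inv_right
  · rw [Ring.inverse_non_unit _ hb]
    exact Commute.zero_right a



variable (A C Q : R)

noncomputable def ncX (j : ℕ) : R := Ring.inverse (1 - C * Q ^ j)
noncomputable def ncY (j : ℕ) : R := A - C * Q ^ j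
noncomputable def ncu (j : ℕ) : R := ncX C Q j * (1 - A * Q ^ j)
noncomputable def ncv (n j : ℕ) : R :=
  Ring.inverse (1 - Q * Q ^ j) * (1 - Ring.inverse (Q ^ n) * Q ^ j) * Q
noncomputable def ncU (k : ℕ) : R := opr k (ncu A C Q)
noncomputable def ncw (n k : ℕ) : R := opr k (ncv Q n)
noncomputable def ncD : ℕ → R
  | 0 => 1
  | n + 1 => ncX C Q 0 * opr n (fun j => ncY A C Q (j + 1) * ncX C Q (j + 1)) * (A - C)

variable {A C Q}

/-- everything built from `Q` commutes with anything commuting with `Q`. -/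
theorem commute_ncv {x : R} (hx : Commute x Q) (n j : ℕ) : Commute x (ncv Q n j) := by
  unfold ncv
  exact ((commute_ringInverse ((Commute.one_right x).sub_right
      (hx.mul_right (hx.pow_right j)))).mul_right
    ((Commute.one_right x).sub_right
      ((commute_ringInverse (hx.pow_right n)).mul_right (hx.pow_right j)))).mul_right hx

theorem commute_Q_ncX (hQC : Commute Q C) (j : ℕ) : Commute Q (ncX C Q j) :=
  commute_ringInverse ((Commute.one_right Q).sub_right
    (hQC.mul_right ((Commute.refl Q).pow_right j)))

theorem commute_Q_ncY (hQA : Commute Q A) (hQC : Commute Q C) (j : ℕ) :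
    Commute Q (ncY A C Q j) :=
  hQA.sub_right (hQC.mul_right ((Commute.refl Q).pow_right j))

theorem commute_ncu_Q (hQA : Commute Q A) (hQC : Commute Q C) (j : ℕ) :
    Commute (ncu A C Q j) Q :=
  (((commute_Q_ncX hQC j).symm).mul_left
    (((Commute.one_right Q).sub_right (hQA.mul_right ((Commute.refl Q).pow_right j))).symm))

-- basic scalar facts
theorem Ri_succ (hQ : IsUnit Q) (n : ℕ) :
    Ring.inverse (Q ^ (n + 1)) * Q = Ring.inverse (Q ^ n) := by
  have h : Ring.inverse (Q ^ (n + 1)) = Ring.inverse Q ^ (n + 1) := (Ring.inverse_pow Q _).symm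
  rw [h, pow_succ, mul_assoc, Ring.inverse_mul_cancel Q hQ, mul_one, Ring.inverse_pow]

theorem key1 (hQ : IsUnit Q) (n k : ℕ) :
    Ring.inverse (Q ^ (n + 1)) * Q ^ (k + 1) = Ring.inverse (Q ^ n) * Q ^ k := by
  rw [pow_succ' Q k, ← mul_assoc, Ri_succ hQ]

theorem ncw_succ (n k : ℕ) : ncw Q n (k + 1) = ncw Q n k * ncv Q n k :=
  opr_succ k _

theorem rel (hQ : IsUnit Q) (n k : ℕ) :
    ncw Q (n + 1) k * (1 - Ring.inverse (Q ^ (n + 1)) * Q ^ k) =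
      ncw Q n k * (1 - Ring.inverse (Q ^ (n + 1))) := by
  induction k with
  | zero => simp [ncw, opr_zero]
  | succ k ih =>
    set a := Ring.inverse (Q ^ (n + 1)) with ha
    set b := Ring.inverse (Q ^ n) with hb
    have hQa : Commute Q a := commute_ringInverse ((Commute.refl Q).pow_right (n + 1))
    have hQb : Commute Q b := commute_ringInverse ((Commute.refl Q).pow_right n)
    have hQT : Commute Q (1 - b * Q ^ k) :=
      (Commute.one_right Q).sub_right (hQb.mul_right ((Commute.refl Q).pow_right k))
    have hT'Q : Commute (1 - a * Q ^ k) Q :=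
      ((Commute.one_right Q).sub_right (hQa.mul_right ((Commute.refl Q).pow_right k))).symm
    have hJT' : Commute (Ring.inverse (1 - Q * Q ^ k)) (1 - a * Q ^ k) :=
      (commute_ringInverse ((Commute.one_right _).sub_right
        (hT'Q.mul_right (hT'Q.pow_right k)))).symm
    have h1aQ : Commute (1 - a) Q :=
      ((Commute.one_right Q).sub_right hQa).symm
    have e : (1 : R) - a * Q ^ (k + 1) = 1 - b * Q ^ k := by rw [ha, hb, key1 hQ]
    have sc : ncv Q (n + 1) k * (1 - a * Q ^ (k + 1)) = (1 - a * Q ^ k) * ncv Q n k := by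
      unfold ncv
      rw [← ha, ← hb, e]
      calc Ring.inverse (1 - Q * Q ^ k) * (1 - a * Q ^ k) * Q * (1 - b * Q ^ k)
          = Ring.inverse (1 - Q * Q ^ k) * (1 - a * Q ^ k) * ((1 - b * Q ^ k) * Q) := by
            rw [mul_assoc, hQT.eq]
        _ = (1 - a * Q ^ k) * (Ring.inverse (1 - Q * Q ^ k) * (1 - b * Q ^ k) * Q) := by
            rw [hJT'.eq]; noncomm_ring
    calc ncw Q (n + 1) (k + 1) * (1 - a * Q ^ (k + 1))
        = ncw Q (n + 1) k * (ncv Q (n + 1) k * (1 - a * Q ^ (k + 1))) := by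
          rw [ncw_succ, mul_assoc]
      _ = ncw Q (n + 1) k * ((1 - a * Q ^ k) * ncv Q n k) := by rw [sc]
      _ = ncw Q (n + 1) k * (1 - a * Q ^ k) * ncv Q n k := by rw [mul_assoc]
      _ = ncw Q n k * (1 - a) * ncv Q n k := by rw [ih]
      _ = ncw Q n k * (ncv Q n k * (1 - a)) := by
          rw [mul_assoc, (commute_ncv h1aQ n k).eq]
      _ = ncw Q n (k + 1) * (1 - a) := by rw [← mul_assoc, ← ncw_succ]

theorem rel2 (hQ : IsUnit Q) (n t : ℕ) (hqu : IsUnit (1 - Q * Q ^ t)) :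
    ncw Q (n + 1) (t + 1) * (1 - Q * Q ^ t) =
      ncw Q n t * (1 - Ring.inverse (Q ^ (n + 1))) * Q := by
  set a := Ring.inverse (Q ^ (n + 1)) with ha
  have hQa : Commute Q a := commute_ringInverse ((Commute.refl Q).pow_right (n + 1))
  have hQS : Commute Q (1 - Q * Q ^ t) :=
    (Commute.one_right Q).sub_right ((Commute.refl Q).mul_right ((Commute.refl Q).pow_right t))
  have hT'S : Commute (1 - a * Q ^ t) (1 - Q * Q ^ t) := by
    have hT'Q : Commute (1 - a * Q ^ t) Q :=
      ((Commute.one_right Q).sub_right (hQa.mul_right ((Commute.refl Q).pow_right t))).symm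
    exact (Commute.one_right _).sub_right (hT'Q.mul_right (hT'Q.pow_right t))
  calc ncw Q (n + 1) (t + 1) * (1 - Q * Q ^ t)
      = ncw Q (n + 1) t *
          (Ring.inverse (1 - Q * Q ^ t) * ((1 - a * Q ^ t) * (Q * (1 - Q * Q ^ t)))) := by
        rw [ncw_succ]; unfold ncv; rw [← ha]; noncomm_ring
    _ = ncw Q (n + 1) t *
          (Ring.inverse (1 - Q * Q ^ t) * ((1 - Q * Q ^ t) * ((1 - a * Q ^ t) * Q))) := by
        congr 1
        congr 1
        rw [hQS.eq, mul_left_comm' hT'S]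
    _ = ncw Q (n + 1) t * ((1 - a * Q ^ t) * Q) := by
        rw [← mul_assoc (Ring.inverse (1 - Q * Q ^ t)),
          Ring.inverse_mul_cancel _ hqu, one_mul]
    _ = ncw Q (n + 1) t * (1 - a * Q ^ t) * Q := by rw [mul_assoc]
    _ = ncw Q n t * (1 - a) * Q := by rw [rel hQ n t]

theorem ncw_top (hQ : IsUnit Q) (n : ℕ) : ncw Q n (n + 1) = 0 := by
  rw [ncw_succ]
  have h : ncv Q n n = 0 := by
    unfold ncv
    rw [Ring.inverse_mul_cancel _ (hQ.pow n), sub_self, mul_zero, zero_mul]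
  rw [h, mul_zero]

theorem pascal (hQ : IsUnit Q) (n t : ℕ) (hqu : IsUnit (1 - Q * Q ^ t)) :
    ncw Q (n + 1) (t + 1) = ncw Q n (t + 1) - Ring.inverse (Q ^ n) * ncw Q n t := by
  set a := Ring.inverse (Q ^ (n + 1)) with ha
  set b := Ring.inverse (Q ^ n) with hb
  have hQb : Commute Q b := commute_ringInverse ((Commute.refl Q).pow_right n)
  have hbw : Commute b (ncw Q n t) :=
    commute_opr (fun j => commute_ncv hQb.symm n j) t
  apply hqu.mul_right_cancel
  rw [rel2 hQ n t hqu]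
  have hab : a * Q = b := Ri_succ hQ n
  -- RHS computation
  have hscal : ncv Q n t * (1 - Q * Q ^ t) = (1 - b * Q ^ t) * Q := by
    unfold ncv
    rw [← hb]
    have hQS : Commute Q (1 - Q * Q ^ t) :=
      (Commute.one_right Q).sub_right ((Commute.refl Q).mul_right ((Commute.refl Q).pow_right t))
    have hTS : Commute (1 - b * Q ^ t) (1 - Q * Q ^ t) := by
      have hTQ : Commute (1 - b * Q ^ t) Q :=
        ((Commute.one_right Q).sub_right (hQb.mul_right ((Commute.refl Q).pow_right t))).symm
      exact (Commute.one_right _).sub_right (hTQ.mul_right (hTQ.pow_right t))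
    calc Ring.inverse (1 - Q * Q ^ t) * (1 - b * Q ^ t) * Q * (1 - Q * Q ^ t)
        = Ring.inverse (1 - Q * Q ^ t) * ((1 - Q * Q ^ t) * ((1 - b * Q ^ t) * Q)) := by
          rw [mul_assoc, mul_assoc, hQS.eq, ← mul_assoc (1 - b * Q ^ t), hTS.eq]
          noncomm_ring
      _ = (1 - b * Q ^ t) * Q := by
          rw [← mul_assoc, Ring.inverse_mul_cancel _ hqu, one_mul]
  have expand : (ncw Q n (t + 1) - b * ncw Q n t) * (1 - Q * Q ^ t) =
      ncw Q n t * ((1 - b * Q ^ t) * Q - b * (1 - Q * Q ^ t)) := by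
    rw [ncw_succ, sub_mul, mul_assoc, hscal, hbw.eq, mul_assoc, ← mul_sub]
  rw [expand, mul_assoc]
  congr 1
  -- (1 - a) * Q = (1 - b*Q^t)*Q - b*(1 - Q*Q^t)
  rw [sub_mul, one_mul, hab, sub_mul, one_mul, mul_sub, mul_one]
  have : b * Q ^ t * Q = b * (Q * Q ^ t) := by
    rw [mul_assoc, pow_mul_comm']
  rw [this]
  abel

theorem dagger (m : ℕ)
    (hCu : ∀ j, 1 ≤ j → j ≤ m + 1 → IsUnit (1 - C * Q ^ j)) :
    ncX C Q 0 * (1 - A) *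
        (opr m (fun j => ncX C Q (j + 1) * ncY A C Q (j + 1)) * ncX C Q (m + 1)) =
      ncX C Q 0 * opr m (fun j => ncY A C Q (j + 1) * ncX C Q (j + 1)) -
        ncX C Q 0 * opr (m + 1) (fun j => ncY A C Q (j + 1) * ncX C Q (j + 1)) := by
  induction m with
  | zero =>
    have h1 : IsUnit (1 - C * Q ^ 1) := hCu 1 le_rfl le_rfl
    have key : (1 - A) * ncX C Q 1 = 1 - ncY A C Q 1 * ncX C Q 1 := by
      have h2 : (1 - C * Q ^ 1) * ncX C Q 1 = 1 := Ring.mul_inverse_cancel _ h1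
      have h3 : ((1 : R) - C * Q ^ 1) = (1 - A) + ncY A C Q 1 := by unfold ncY; abel
      rw [h3, add_mul] at h2
      exact eq_sub_of_add_eq h2
    simp only [opr_succ, opr_zero, one_mul, mul_one]
    rw [mul_assoc, key, mul_sub, mul_one]
  | succ m ih =>
    have ih' := ih (fun j h1 h2 => hCu j h1 (by omega))
    have hu1 : IsUnit (1 - C * Q ^ (m + 1)) := hCu (m + 1) (by omega) (by omega)
    have hu2 : IsUnit (1 - C * Q ^ (m + 2)) := hCu (m + 2) (by omega) (by omega)
    have h2 : (1 - C * Q ^ (m + 2)) * ncX C Q (m + 2) = 1 := Ring.mul_inverse_cancel _ hu2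
    have h1 : ncX C Q (m + 1) * (1 - C * Q ^ (m + 1)) = 1 := Ring.inverse_mul_cancel _ hu1
    have brack : ncX C Q (m + 1) * ncY A C Q (m + 2) * ncX C Q (m + 2)
        = ncX C Q (m + 1) * ncY A C Q (m + 1) * ncX C Q (m + 2)
          + ncX C Q (m + 1) - ncX C Q (m + 2) := by
      have hd : ncY A C Q (m + 2)
          = ncY A C Q (m + 1) + ((1 - C * Q ^ (m + 2)) - (1 - C * Q ^ (m + 1))) := by
        unfold ncY; abel
      calc ncX C Q (m + 1) * ncY A C Q (m + 2) * ncX C Q (m + 2)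
          = ncX C Q (m + 1) * ncY A C Q (m + 1) * ncX C Q (m + 2)
            + ncX C Q (m + 1) * ((1 - C * Q ^ (m + 2)) * ncX C Q (m + 2))
            - ncX C Q (m + 1) * (1 - C * Q ^ (m + 1)) * ncX C Q (m + 2) := by
            rw [hd]; noncomm_ring
        _ = _ := by rw [h2, h1, mul_one, one_mul]
    have inner : ncX C Q (m + 2)
        - ncX C Q (m + 1) * ncY A C Q (m + 1) * ncX C Q (m + 2)
        - ncX C Q (m + 1)
        + ncX C Q (m + 1) * ncY A C Q (m + 2) * ncX C Q (m + 2) = 0 := by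
      rw [brack]; abel
    calc ncX C Q 0 * (1 - A) *
          (opr (m + 1) (fun j => ncX C Q (j + 1) * ncY A C Q (j + 1)) * ncX C Q (m + 2))
        = (ncX C Q 0 * (1 - A) *
            (opr m (fun j => ncX C Q (j + 1) * ncY A C Q (j + 1)) * ncX C Q (m + 1))) *
            (ncY A C Q (m + 1) * ncX C Q (m + 2)) := by
          rw [opr_succ]; noncomm_ring
      _ = (ncX C Q 0 * opr m (fun j => ncY A C Q (j + 1) * ncX C Q (j + 1)) -
            ncX C Q 0 * opr (m + 1) (fun j => ncY A C Q (j + 1) * ncX C Q (j + 1))) *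
            (ncY A C Q (m + 1) * ncX C Q (m + 2)) := by rw [ih']
      _ = _ := by
          have exp : (ncX C Q 0 * opr m (fun j => ncY A C Q (j + 1) * ncX C Q (j + 1)) -
                ncX C Q 0 * opr (m + 1) (fun j => ncY A C Q (j + 1) * ncX C Q (j + 1))) *
                (ncY A C Q (m + 1) * ncX C Q (m + 2))
              - (ncX C Q 0 * opr (m + 1) (fun j => ncY A C Q (j + 1) * ncX C Q (j + 1)) -
                ncX C Q 0 * opr (m + 2) (fun j => ncY A C Q (j + 1) * ncX C Q (j + 1)))
              = (ncX C Q 0 * opr m (fun j => ncY A C Q (j + 1) * ncX C Q (j + 1))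
                  * ncY A C Q (m + 1)) *
                (ncX C Q (m + 2)
                  - ncX C Q (m + 1) * ncY A C Q (m + 1) * ncX C Q (m + 2)
                  - ncX C Q (m + 1)
                  + ncX C Q (m + 1) * ncY A C Q (m + 2) * ncX C Q (m + 2)) := by
            rw [opr_succ (m + 1), opr_succ m]; noncomm_ring
          have exp0 := exp.trans (by rw [inner, mul_zero])
          exact sub_eq_zero.mp exp0

theorem ncD_rec (hQ : IsUnit Q) (hQA : Commute Q A) (hQC : Commute Q C) (n : ℕ)
    (hC : ∀ m, m < n + 1 → IsUnit (1 - C * Q ^ m)) :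
    ncD A C Q (n + 1) =
      ncD A C Q n - ncu A C Q 0 * ncD (A * Q) (C * Q) Q n * Ring.inverse (Q ^ n) := by
  cases n with
  | zero =>
    have hC0 : IsUnit (1 - C) := by
      have := hC 0 (by omega); simpa using this
    have h := Ring.inverse_mul_cancel _ hC0
    show ncX C Q 0 * opr 0 (fun j => ncY A C Q (j + 1) * ncX C Q (j + 1)) * (A - C)
        = ncD A C Q 0 - ncu A C Q 0 * ncD (A * Q) (C * Q) Q 0 * Ring.inverse (Q ^ 0)
    simp only [ncD, opr_zero, mul_one, one_mul, pow_zero, Ring.inverse_one]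
    unfold ncu ncX
    simp only [pow_zero, mul_one]
    have e : (A - C) = (1 - C) - (1 - A) := by abel
    rw [e, mul_sub, h]
  | succ m =>
    have hQA' : Commute Q (A * Q) := hQA.mul_right (Commute.refl Q)
    have hQC' : Commute Q (C * Q) := hQC.mul_right (Commute.refl Q)
    have hQX : ∀ j, Commute Q (ncX C Q j) := commute_Q_ncX hQC
    have hQY : ∀ j, Commute Q (ncY A C Q j) := commute_Q_ncY hQA hQC
    -- (a) shift computation for ncD (A*Q) (C*Q) Q (m+1)
    have e1 : ncX (C * Q) Q 0 = ncX C Q 1 := by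
      unfold ncX; rw [pow_zero, mul_one, pow_one]
    have e2 : ∀ j : ℕ, ncY (A * Q) (C * Q) Q (j + 1) * ncX (C * Q) Q (j + 1)
        = (ncY A C Q (j + 1) * ncX C Q (j + 2)) * Q := by
      intro j
      have eY : ncY (A * Q) (C * Q) Q (j + 1) = ncY A C Q (j + 1) * Q := by
        unfold ncY
        rw [sub_mul, mul_assoc, mul_assoc, pow_mul_comm']
      have eX : ncX (C * Q) Q (j + 1) = ncX C Q (j + 2) := by
        unfold ncX
        rw [mul_assoc, ← pow_succ']
      rw [eY, eX, mul_assoc, (hQX (j + 2)).eq, ← mul_assoc]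
    have shiftD : ncD (A * Q) (C * Q) Q (m + 1)
        = ncX C Q 1 * opr m (fun j => ncY A C Q (j + 1) * ncX C Q (j + 2)) * (A - C)
            * Q ^ (m + 1) := by
      show ncX (C * Q) Q 0 *
          opr m (fun j => ncY (A * Q) (C * Q) Q (j + 1) * ncX (C * Q) Q (j + 1)) *
          (A * Q - C * Q) = _
      rw [e1, opr_congr (fun j _ => e2 j),
        opr_mul_const m _ Q (fun j => (hQY (j + 1)).mul_right (hQX (j + 2))),
        ← sub_mul]
      have hQAC : Commute (Q ^ m) (A - C) :=
        ((hQA.sub_right hQC).pow_left m)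
      calc ncX C Q 1 * (opr m (fun j => ncY A C Q (j + 1) * ncX C Q (j + 2)) * Q ^ m) *
            ((A - C) * Q)
          = ncX C Q 1 * opr m (fun j => ncY A C Q (j + 1) * ncX C Q (j + 2)) *
              (Q ^ m * (A - C)) * Q := by noncomm_ring
        _ = ncX C Q 1 * opr m (fun j => ncY A C Q (j + 1) * ncX C Q (j + 2)) *
              ((A - C) * Q ^ m) * Q := by rw [hQAC.eq]
        _ = _ := by rw [pow_succ]; noncomm_ring
    -- (b,c) the subtracted term
    have hu0 : ncu A C Q 0 = ncX C Q 0 * (1 - A) := by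
      unfold ncu; rw [pow_zero, mul_one]
    have shift2 : ncX C Q 1 * opr m (fun j => ncY A C Q (j + 1) * ncX C Q (j + 2))
        = opr m (fun j => ncX C Q (j + 1) * ncY A C Q (j + 1)) * ncX C Q (m + 1) := by
      exact opr_shift m (fun j => ncX C Q (j + 1)) (fun j => ncY A C Q (j + 1))
    have term2 : ncu A C Q 0 * ncD (A * Q) (C * Q) Q (m + 1) * Ring.inverse (Q ^ (m + 1))
        = ncX C Q 0 * (1 - A) *
            (opr m (fun j => ncX C Q (j + 1) * ncY A C Q (j + 1)) * ncX C Q (m + 1)) *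
            (A - C) := by
      rw [shiftD, hu0, shift2]
      calc ncX C Q 0 * (1 - A) *
            ((opr m fun j => ncX C Q (j + 1) * ncY A C Q (j + 1)) * ncX C Q (m + 1) *
              (A - C) * Q ^ (m + 1)) * Ring.inverse (Q ^ (m + 1))
          = ncX C Q 0 * (1 - A) *
              ((opr m fun j => ncX C Q (j + 1) * ncY A C Q (j + 1)) * ncX C Q (m + 1)) *
              (A - C) * (Q ^ (m + 1) * Ring.inverse (Q ^ (m + 1))) := by noncomm_ring
        _ = _ := by rw [Ring.mul_inverse_cancel _ (hQ.pow (m + 1)), mul_one]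
    rw [term2, dagger m (fun j h1 h2 => hC j (by omega))]
    show ncX C Q 0 * opr (m + 1) (fun j => ncY A C Q (j + 1) * ncX C Q (j + 1)) * (A - C) =
      ncX C Q 0 * opr m (fun j => ncY A C Q (j + 1) * ncX C Q (j + 1)) * (A - C) - _
    noncomm_ring

theorem key (Q : R) (hQ : IsUnit Q) :
    ∀ n (A C : R), Commute Q A → Commute Q C →
      (∀ m, m < n → IsUnit (1 - C * Q ^ m)) →
      (∀ m, m < n → IsUnit (1 - Q ^ (m + 1))) →
      ∑ k ∈ Finset.range (n + 1), ncU A C Q k * ncw Q n k = ncD A C Q n := by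
  intro n
  induction n with
  | zero =>
    intro A C _ _ _ _
    simp [ncU, ncw, opr_zero, ncD]
  | succ n ih =>
    intro A C hQA hQC hC hq
    have hQA' : Commute Q (A * Q) := hQA.mul_right (Commute.refl Q)
    have hQC' : Commute Q (C * Q) := hQC.mul_right (Commute.refl Q)
    have ncu_shift : ∀ j : ℕ, ncu A C Q (j + 1) = ncu (A * Q) (C * Q) Q j := by
      intro j
      unfold ncu ncX
      rw [pow_succ' Q j, ← mul_assoc, ← mul_assoc]
    have hUsucc : ∀ t, ncU A C Q (t + 1) = ncu A C Q 0 * ncU (A * Q) (C * Q) Q t := by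
      intro t
      unfold ncU
      rw [opr_succ', opr_congr (fun j _ => ncu_shift j)]
    have hbw : ∀ t, Commute (Ring.inverse (Q ^ n)) (ncw Q n t) := fun t =>
      commute_opr (fun j =>
        commute_ncv (commute_ringInverse ((Commute.refl Q).pow_right n)).symm n j) t
    have hsummand : ∀ t ∈ Finset.range (n + 1),
        ncU A C Q (t + 1) * ncw Q (n + 1) (t + 1)
          = ncU A C Q (t + 1) * ncw Q n (t + 1)
            - ncu A C Q 0 * (ncU (A * Q) (C * Q) Q t * ncw Q n t) * Ring.inverse (Q ^ n) := by
      intro t ht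
      have ht' : t < n + 1 := Finset.mem_range.mp ht
      have hqu : IsUnit (1 - Q * Q ^ t) := by
        rw [← pow_succ']; exact hq t ht'
      have hpas := pascal hQ n t hqu
      calc ncU A C Q (t + 1) * ncw Q (n + 1) (t + 1)
          = ncU A C Q (t + 1) * (ncw Q n (t + 1) - Ring.inverse (Q ^ n) * ncw Q n t) := by
            rw [hpas]
        _ = ncU A C Q (t + 1) * ncw Q n (t + 1)
            - (ncu A C Q 0 * ncU (A * Q) (C * Q) Q t) *
                (Ring.inverse (Q ^ n) * ncw Q n t) := by rw [mul_sub, hUsucc t]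
        _ = _ := by rw [(hbw t).eq]; noncomm_ring
    rw [Finset.sum_range_succ', Finset.sum_congr rfl hsummand, Finset.sum_sub_distrib]
    have S1 : (∑ t ∈ Finset.range (n + 1), ncU A C Q (t + 1) * ncw Q n (t + 1))
        + ncU A C Q 0 * ncw Q (n + 1) 0 = ncD A C Q n := by
      calc (∑ t ∈ Finset.range (n + 1), ncU A C Q (t + 1) * ncw Q n (t + 1))
            + ncU A C Q 0 * ncw Q (n + 1) 0
          = (∑ t ∈ Finset.range (n + 1), ncU A C Q (t + 1) * ncw Q n (t + 1))
            + ncU A C Q 0 * ncw Q n 0 := by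
              rw [show ncw Q (n + 1) 0 = 1 from rfl, show ncw Q n 0 = 1 from rfl]
        _ = ∑ k ∈ Finset.range (n + 1 + 1), ncU A C Q k * ncw Q n k :=
            (Finset.sum_range_succ' (fun k => ncU A C Q k * ncw Q n k) (n + 1)).symm
        _ = (∑ k ∈ Finset.range (n + 1), ncU A C Q k * ncw Q n k)
            + ncU A C Q (n + 1) * ncw Q n (n + 1) :=
            Finset.sum_range_succ (fun k => ncU A C Q k * ncw Q n k) (n + 1)
        _ = ncD A C Q n := by
            rw [ncw_top hQ n, mul_zero, add_zero,
              ih A C hQA hQC (fun m hm => hC m (by omega)) (fun m hm => hq m (by omega))]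
    have S2 : (∑ t ∈ Finset.range (n + 1),
          ncu A C Q 0 * (ncU (A * Q) (C * Q) Q t * ncw Q n t) * Ring.inverse (Q ^ n))
        = ncu A C Q 0 * ncD (A * Q) (C * Q) Q n * Ring.inverse (Q ^ n) := by
      have hC'' : ∀ m, m < n → IsUnit (1 - C * Q * Q ^ m) := by
        intro m hm
        rw [mul_assoc, ← pow_succ']
        exact hC (m + 1) (by omega)
      rw [← Finset.sum_mul, ← Finset.mul_sum,
        ih (A * Q) (C * Q) hQA' hQC' hC'' (fun m hm => hq m (by omega))]
    rw [sub_add_eq_add_sub, S1, S2]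
    exact (ncD_rec hQ hQA hQC n hC).symm

end NCChu


open NCChu in
/-- Noncommutative q-Chu–Vandermonde summation of type II:
`₂φ₁⌊A, Q⁻ⁿ; C; Q, Q⌉ = ⌊CA⁻¹Q; C; Q, A⌉_n (A−CQⁿ)⁻¹ (A−C)`. -/
theorem ncQChuVandermondeII {R : Type*} [Ring R] (A C Q : R) (n : ℕ)
    (hQ : IsUnit Q) (hA : IsUnit A)
    (hQA : Q * A = A * Q) (hQC : Q * C = C * Q)
    (hC : ∀ m : ℕ, m < n → IsUnit (1 - C * Q ^ m))
    (hq : ∀ m : ℕ, m < n → IsUnit (1 - Q ^ (m + 1)))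
    (hACn : IsUnit (A - C * Q ^ n)) :
    (∑ k ∈ Finset.range (n + 1),
      opr k (fun j =>
        Ring.inverse (1 - C * Q ^ j) * (1 - A * Q ^ j) *
        (Ring.inverse (1 - Q * Q ^ j) *
          (1 - Ring.inverse (Q ^ n) * Q ^ j) * Q))) =
    opr n (fun j =>
      Ring.inverse (1 - C * Q ^ j) * (1 - C * Ring.inverse A * Q * Q ^ j) * A) *
      Ring.inverse (A - C * Q ^ n) * (A - C) := by
  have hQA' : Commute Q A := hQA
  have hQC' : Commute Q C := hQC
  have hterm : ∀ k, opr k (fun j =>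
      Ring.inverse (1 - C * Q ^ j) * (1 - A * Q ^ j) *
        (Ring.inverse (1 - Q * Q ^ j) * (1 - Ring.inverse (Q ^ n) * Q ^ j) * Q))
      = ncU A C Q k * ncw Q n k := by
    intro k
    show opr k (fun j => ncu A C Q j * ncv Q n j) = _
    exact opr_split k (ncu A C Q) (ncv Q n)
      (fun i j => commute_ncv (commute_ncu_Q hQA' hQC' i) n j)
  rw [Finset.sum_congr rfl (fun k _ => hterm k), key Q hQ n A C hQA' hQC' hC hq]
  have hg : ∀ j : ℕ, Ring.inverse (1 - C * Q ^ j) * (1 - C * Ring.inverse A * Q * Q ^ j) * A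
      = ncX C Q j * ncY A C Q (j + 1) := by
    intro j
    have hpow : Q ^ (j + 1) * A = A * Q ^ (j + 1) := (hQA'.pow_left (j + 1)).eq
    have h1 : (1 - C * Ring.inverse A * Q * Q ^ j) * A = A - C * Q ^ (j + 1) := by
      rw [sub_mul, one_mul]
      congr 1
      calc C * Ring.inverse A * Q * Q ^ j * A
          = C * Ring.inverse A * (Q * Q ^ j) * A := by rw [mul_assoc (C * Ring.inverse A)]
        _ = C * Ring.inverse A * Q ^ (j + 1) * A := by rw [← pow_succ']
        _ = C * Ring.inverse A * (A * Q ^ (j + 1)) := by rw [mul_assoc, hpow]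
        _ = C * (Ring.inverse A * A) * Q ^ (j + 1) := by noncomm_ring
        _ = C * Q ^ (j + 1) := by rw [Ring.inverse_mul_cancel _ hA, mul_one]
    show ncX C Q j * (1 - C * Ring.inverse A * Q * Q ^ j) * A = _
    rw [mul_assoc, h1]
    rfl
  rw [opr_congr (fun j _ => hg j)]
  cases n with
  | zero =>
    rw [opr_zero, one_mul]
    have hACn' : IsUnit (A - C) := by simpa using hACn
    have : Ring.inverse (A - C * Q ^ 0) * (A - C) = 1 := by
      rw [pow_zero, mul_one]
      exact Ring.inverse_mul_cancel _ hACn'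
    rw [this]
    rfl
  | succ m =>
    rw [opr_pair m (ncX C Q) (ncY A C Q)]
    rw [mul_assoc (ncX C Q 0 * opr m (fun j => ncY A C Q (j + 1) * ncX C Q (j + 1)))
      (ncY A C Q (m + 1)) (Ring.inverse (A - C * Q ^ (m + 1)))]
    rw [show ncY A C Q (m + 1) * Ring.inverse (A - C * Q ^ (m + 1)) = 1 from
      Ring.mul_inverse_cancel _ hACn, mul_one]
    rfl
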